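/- arXiv:1812.01086 — 9 statements merged into one kernel-verified Lean document; each statement's English description precedes it below -/
import Mathlib

section
/- Three consecutive normal lines of a parallel pair (X,U) at indices i-1, i, i+1 are concurrent if and only if b(i+1/2) = b(i-1/2), i.e., the intersection points E(i-1/2) = X(i-1) + b(i-1/2)⁻¹ U(i-1) and E(i+1/2) = X(i) + b(i+1/2)⁻¹ U(i) coincide iff b(i-1/2) = b(i+1/2). -/
noncomputable def det3 (a b c : Fin 3 → ℝ) : ℝ := Matrix.det (Matrix.of ![a, b, c])

/-
With `b i` standing for `b(i+1/2)`, the parallelism relation on the edge `[i-1, i]` gives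
`U (i-1) = U i + b(i-1/2) (X i - X (i-1))`, so `E(i-1/2) = X i + b(i-1/2)⁻¹ U i`. Thus `E(i-1/2)` and
`E(i+1/2)` both lie on the normal line through `X i` in direction `U i`, and since `U i ≠ 0`
(by transversality) they coincide exactly when the parameters `b(i-1/2)⁻¹` and `b(i+1/2)⁻¹` agree.
-/

lemma ne_zero_of_det3_ne_zero {a b c : Fin 3 → ℝ} (h : det3 a b c ≠ 0) : c ≠ 0 := by
  rintro rfl
  simp [det3, Matrix.det_fin_three] at h

lemma add_inv_smul_eq_of_sub_eq_neg_smul {𝕜 V : Type*} [Field 𝕜] [AddCommGroup V] [Module 𝕜 V]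
    {x y u v : V} {β : 𝕜} (hpar : v - u = -β • (y - x)) (hβ : β ≠ 0) :
    x + β⁻¹ • u = y + β⁻¹ • v := by
  rw [sub_eq_iff_eq_add'.mp hpar, smul_add, smul_smul, mul_neg, inv_mul_cancel₀ hβ, neg_smul,
    one_smul]
  abel

lemma inv_smul_eq_inv_smul_iff {𝕜 V : Type*} [Field 𝕜] [AddCommGroup V] [Module 𝕜 V]
    {v : V} (hv : v ≠ 0) {α β : 𝕜} : α⁻¹ • v = β⁻¹ • v ↔ α = β :=
  (smul_left_injective 𝕜 hv).eq_iff.trans inv_inj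

/-- three consecutive normal lines are concurrent iff b(i-1/2)=b(i+1/2).
Here `b i`, `E i` stand for the half-integer values `b(i+1/2)`, `E(i+1/2)`. -/
theorem consecutive_normals_concurrent_iff
    (X U : ℤ → Fin 3 → ℝ) (b : ℤ → ℝ)
    (hpar : ∀ i, U (i + 1) - U i = -b i • (X (i + 1) - X i))
    (hb : ∀ i, b i ≠ 0)
    (htrans : ∀ i, 0 < det3 (X i) (X (i + 1)) (U i))
    (i : ℤ) :
    X (i - 1) + (b (i - 1))⁻¹ • U (i - 1) = X i + (b i)⁻¹ • U i ↔
      b (i - 1) = b i := by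
  have hUi : U i ≠ 0 := ne_zero_of_det3_ne_zero (htrans i).ne'
  have hE : X (i - 1) + (b (i - 1))⁻¹ • U (i - 1) = X i + (b (i - 1))⁻¹ • U i := by
    simpa only [sub_add_cancel] using add_inv_smul_eq_of_sub_eq_neg_smul (hpar (i - 1)) (hb (i - 1))
  rw [hE, add_right_inj, inv_smul_eq_inv_smul_iff hUi]
end

section
/- A transversal vector field Ū along X is parallel and contained in the plane spanned by X(i) and U(i) for each i if and only if Ū = c·X + d·U for some constants c and d with d ≠ 0. -/
/-!
Since `X i`, `X (i + 1)`, `U i` form a basis of `ℝ³`, writing `Ub i = c i • X i + d i • U i` and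
subtracting the parallel transport law of `U` from that of `Ub` forces `c (i + 1) = c i` and
`d (i + 1) = d i`; transversality of `Ub` gives `d ≠ 0`. Conversely `c • X + d • U` moves by
`(c - d * b i) • (X (i + 1) - X i)`.
-/

lemma det3_smul_add_smul (a b u : Fin 3 → ℝ) (m n : ℝ) :
    det3 a b (m • a + n • u) = n * det3 a b u := by
  simp only [det3, Matrix.det_fin_three, Matrix.of_apply, Matrix.cons_val, Pi.add_apply,
    Pi.smul_apply, smul_eq_mul]
  ring

lemma eq_zero_of_det3_ne_zero {a b u : Fin 3 → ℝ} (h : det3 a b u ≠ 0) {α β γ : ℝ}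
    (hcomb : α • a + β • b + γ • u = 0) : α = 0 ∧ β = 0 ∧ γ = 0 := by
  have hli := Fintype.linearIndependent_iff.mp
    (Matrix.linearIndependent_rows_of_det_ne_zero (A := Matrix.of ![a, b, u]) h) ![α, β, γ]
    (by rw [Fin.sum_univ_three]; exact hcomb)
  exact ⟨hli 0, hli 1, hli 2⟩

lemma coeffs_eq_of_parallel_step {x x' u u' : Fin 3 → ℝ} {β s c d c' d' : ℝ}
    (hbasis : det3 x x' u ≠ 0) (hu : u' - u = -β • (x' - x))
    (hs : (c' • x' + d' • u') - (c • x + d • u) = s • (x' - x)) : c' = c ∧ d' = d := by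
  have hcomb : (d' * β - c + s) • x + (c' - d' * β - s) • x' + (d' - d) • u = 0 := by
    linear_combination (norm := module) hs - d' • hu
  obtain ⟨h₁, h₂, h₃⟩ := eq_zero_of_det3_ne_zero hbasis hcomb
  constructor <;> linarith

lemma apply_eq_apply_zero_of_forall_succ_eq {α : Type*} {f : ℤ → α} (h : ∀ i, f (i + 1) = f i)
    (i : ℤ) : f i = f 0 := by
  simpa using (show Function.Periodic f 1 from h).int_mul_eq i

theorem parallel_in_normal_plane_iff_general
    (X U Ub : ℤ → Fin 3 → ℝ) (b : ℤ → ℝ)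
    (htrans : ∀ i, 0 < det3 (X i) (X (i + 1)) (U i))
    (hpar : ∀ i, U (i + 1) - U i = -b i • (X (i + 1) - X i))
    (htransUb : ∀ i, 0 < det3 (X i) (X (i + 1)) (Ub i)) :
    ((∀ i, ∃ s : ℝ, Ub (i + 1) - Ub i = s • (X (i + 1) - X i)) ∧
      ∀ i, Ub i ∈ Submodule.span ℝ ({X i, U i} : Set (Fin 3 → ℝ))) ↔
    ∃ c d : ℝ, d ≠ 0 ∧ ∀ i, Ub i = c • X i + d • U i := by
  constructor
  · rintro ⟨hparUb, hspan⟩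
    choose c d hUb using fun i => Submodule.mem_span_pair.mp (hspan i)
    have hstep (i : ℤ) : c (i + 1) = c i ∧ d (i + 1) = d i := by
      obtain ⟨s, hs⟩ := hparUb i
      rw [← hUb i, ← hUb (i + 1)] at hs
      exact coeffs_eq_of_parallel_step (htrans i).ne' (hpar i) hs
    have hd0 : d 0 ≠ 0 := by
      have h := htransUb 0
      rw [← hUb 0, det3_smul_add_smul] at h
      exact left_ne_zero_of_mul h.ne'
    refine ⟨c 0, d 0, hd0, fun i => ?_⟩
    rw [← hUb i, apply_eq_apply_zero_of_forall_succ_eq (fun i => (hstep i).1),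
      apply_eq_apply_zero_of_forall_succ_eq (fun i => (hstep i).2)]
  · rintro ⟨c, d, -, hUb⟩
    refine ⟨fun i => ⟨c - d * b i, ?_⟩, fun i => hUb i ▸ Submodule.mem_span_pair.mpr ⟨c, d, rfl⟩⟩
    rw [hUb, hUb]
    linear_combination (norm := module) d • hpar i

/-- a transversal field Ū is parallel and contained in the normal plane
iff Ū = c X + d U for constants c, d with d ≠ 0. -/
theorem parallel_in_normal_plane_iff
    (X U Ub : ℤ → Fin 3 → ℝ) (b : ℤ → ℝ)
    (hconv : ∀ i, 0 < det3 (X (i - 1)) (X i) (X (i + 1)))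
    (htrans : ∀ i, 0 < det3 (X i) (X (i + 1)) (U i))
    (hpar : ∀ i, U (i + 1) - U i = -b i • (X (i + 1) - X i))
    (htransUb : ∀ i, 0 < det3 (X i) (X (i + 1)) (Ub i)) :
    ((∀ i, ∃ s : ℝ, Ub (i + 1) - Ub i = s • (X (i + 1) - X i)) ∧
      ∀ i, Ub i ∈ Submodule.span ℝ ({X i, U i} : Set (Fin 3 → ℝ))) ↔
    ∃ c d : ℝ, d ≠ 0 ∧ ∀ i, Ub i = c • X i + d • U i :=
  parallel_in_normal_plane_iff_general X U Ub b htrans hpar htransUb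
end

section
/- With λ defined by the osculating-plane condition, the identity β(i+1/2)·Δ(i+1/2) = λ'(i+1/2)·α(i)·α(i+1) holds, where Δ(i+1/2) = [X(i+2)-X(i+1), X(i+1)-X(i), X(i)-X(i-1)], λ'(i+1/2) = λ(i+1)-λ(i), α(i) = [X(i-1),X(i),X(i+1)], and β(i+1/2) = [X(i),X(i+1),U(i)]. -/
section Det3

variable (a b c d u : Fin 3 → ℝ)

lemma det3_expand :
    det3 a b c = a 0 * (b 1 * c 2 - b 2 * c 1) - a 1 * (b 0 * c 2 - b 2 * c 0)
      + a 2 * (b 0 * c 1 - b 1 * c 0) := by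
  simp only [det3, Matrix.det_fin_three, Matrix.of_apply, Matrix.cons_val_zero,
    Matrix.cons_val_one, Matrix.cons_val_two, Matrix.head_cons, Matrix.tail_cons]
  ring

lemma det3_add_smul_right_self (t : ℝ) : det3 a b (u + t • b) = det3 a b u := by
  simp only [det3_expand, Pi.add_apply, Pi.smul_apply, smul_eq_mul]
  ring

lemma det3_osculating (l : ℝ) :
    det3 (c - b) (c - 2 • b + a) (-l • b + u) = det3 (c - b) (a - b) u - l * det3 a b c := by
  simp only [two_nsmul, det3_expand, Pi.add_apply, Pi.sub_apply, Pi.smul_apply, smul_eq_mul]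
  ring

lemma det3_mul_det3_edges :
    det3 b c u * det3 (d - c) (c - b) (b - a) =
      det3 a b c * det3 (d - c) (b - c) u - det3 b c d * det3 (c - b) (a - b) u := by
  simp only [det3_expand, Pi.sub_apply]
  ring

end Det3

theorem beta_Delta_eq_lambda'_alpha_alpha_general
    (X U : ℤ → Fin 3 → ℝ) (b lam : ℤ → ℝ)
    (hpar : ∀ j, U (j + 1) - U j = -b j • (X (j + 1) - X j))
    (hosc : ∀ j, det3 (X (j + 1) - X j) (X (j + 1) - 2 • X j + X (j - 1))
        (-lam j • X j + U j) = 0)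
    (i : ℤ) :
    det3 (X i) (X (i + 1)) (U i) *
        det3 (X (i + 2) - X (i + 1)) (X (i + 1) - X i) (X i - X (i - 1)) =
      (lam (i + 1) - lam i) * det3 (X (i - 1)) (X i) (X (i + 1)) *
        det3 (X i) (X (i + 1)) (X (i + 2)) := by
  have h₀ := hosc i
  have h₁ := hosc (i + 1)
  rw [det3_osculating] at h₀ h₁
  have hU : U (i + 1) = U i + b i • (X i - X (i + 1)) := by
    rw [← sub_eq_iff_eq_add', hpar, neg_smul, ← smul_neg, neg_sub]
  rw [show i + 1 + 1 = i + 2 by ring, add_sub_cancel_right, hU, det3_add_smul_right_self] at h₁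
  linear_combination det3_mul_det3_edges (X (i - 1)) (X i) (X (i + 1)) (X (i + 2)) (U i)
    + det3 (X (i - 1)) (X i) (X (i + 1)) * h₁ - det3 (X i) (X (i + 1)) (X (i + 2)) * h₀

/-- β(i+1/2) Δ(i+1/2) = λ'(i+1/2) α(i) α(i+1). -/
theorem beta_Delta_eq_lambda'_alpha_alpha
    (X U : ℤ → Fin 3 → ℝ) (b lam : ℤ → ℝ)
    (hconv : ∀ j, 0 < det3 (X (j - 1)) (X j) (X (j + 1)))
    (htrans : ∀ j, 0 < det3 (X j) (X (j + 1)) (U j))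
    (hpar : ∀ j, U (j + 1) - U j = -b j • (X (j + 1) - X j))
    (hosc : ∀ j, det3 (X (j + 1) - X j) (X (j + 1) - 2 • X j + X (j - 1))
        (-lam j • X j + U j) = 0)
    (i : ℤ) :
    det3 (X i) (X (i + 1)) (U i) *
        det3 (X (i + 2) - X (i + 1)) (X (i + 1) - X i) (X i - X (i - 1)) =
      (lam (i + 1) - lam i) * det3 (X (i - 1)) (X i) (X (i + 1)) *
        det3 (X i) (X (i + 1)) (X (i + 2)) :=
  beta_Delta_eq_lambda'_alpha_alpha_general X U b lam hpar hosc i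
end

section
/- For an equal-volume polygon X, the vector field U(i) = X''(i) + λ(i)X(i) (with λ defined by the osculating-plane condition) is parallel: U(i+1) - U(i) is a scalar multiple of X(i+1) - X(i) for every i. -/
theorem equal_volume_U_parallel_general
    (X : ℤ → Fin 3 → ℝ) (rho2 tau lam : ℤ → ℝ)
    (hstruct2 : ∀ j, (X (j + 2) - 2 • X (j + 1) + X j) - (X (j + 1) - 2 • X j + X (j - 1)) =
        -rho2 j • (X (j + 1) - X j) + tau j • X (j + 1))
    (hlam : ∀ j, lam (j + 1) - lam j = -tau j)
    (i : ℤ) :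
    ∃ s : ℝ,
      ((X (i + 2) - 2 • X (i + 1) + X i) + lam (i + 1) • X (i + 1)) -
          ((X (i + 1) - 2 • X i + X (i - 1)) + lam i • X i) =
        s • (X (i + 1) - X i) :=
  -- the term τ X(i+1) of X''' = -ρ₂ X' + τ X(i+1) cancels against (λ(i+1) - λ(i)) X(i+1)
  ⟨lam i - rho2 i, by linear_combination (norm := module) hstruct2 i + hlam i • X (i + 1)⟩

/-- for an equal-volume polygon, U(i) = X''(i) + λ(i)X(i) is parallel,
where λ' = -τ and τ comes from the structure equations for X'''. -/
theorem equal_volume_U_parallel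
    (X : ℤ → Fin 3 → ℝ) (rho1 rho2 tau lam : ℤ → ℝ)
    (hev : ∀ j, det3 (X (j - 1)) (X j) (X (j + 1)) = 1)
    (hstruct2 : ∀ j, (X (j + 2) - 2 • X (j + 1) + X j) - (X (j + 1) - 2 • X j + X (j - 1)) =
        -rho2 j • (X (j + 1) - X j) + tau j • X (j + 1))
    (hstruct1 : ∀ j, (X (j + 2) - 2 • X (j + 1) + X j) - (X (j + 1) - 2 • X j + X (j - 1)) =
        -rho1 (j + 1) • (X (j + 1) - X j) + tau j • X j)
    (hlam : ∀ j, lam (j + 1) - lam j = -tau j)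
    (i : ℤ) :
    ∃ s : ℝ,
      ((X (i + 2) - 2 • X (i + 1) + X i) + lam (i + 1) • X (i + 1)) -
          ((X (i + 1) - 2 • X i + X (i - 1)) + lam i • X i) =
        s • (X (i + 1) - X i) :=
  equal_volume_U_parallel_general X rho2 tau lam hstruct2 hlam i
end

section
/- If X is equal-volume and Ū is a transversal vector field along X that is both parallel and unimodular, then Ū = U + c·X for some constant c, where U(i) = X''(i) + λ(i)X(i) is the canonical parallel unimodular field. -/
open Matrix

lemma det3_eq_dotProduct_cross (a b c : Fin 3 → ℝ) : det3 a b c = c ⬝ᵥ a ⨯₃ b := by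
  rw [triple_product_permutation, triple_product_eq_det]
  rfl

lemma det3_rotate (a b c : Fin 3 → ℝ) : det3 a b c = det3 b c a := by
  simp only [det3_eq_dotProduct_cross, triple_product_permutation c a b]

lemma det3_sub_right (a b u v : Fin 3 → ℝ) : det3 a b (u - v) = det3 a b u - det3 a b v := by
  simp only [det3_eq_dotProduct_cross, sub_dotProduct]

lemma det3_smul_right (a b u : Fin 3 → ℝ) (t : ℝ) : det3 a b (t • u) = t * det3 a b u := by
  simp only [det3_eq_dotProduct_cross, smul_dotProduct, smul_eq_mul]

lemma det3_self_left_right (a b : Fin 3 → ℝ) : det3 a b a = 0 := by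
  simp only [det3_eq_dotProduct_cross, dot_self_cross]

lemma det3_self_middle_right (a b : Fin 3 → ℝ) : det3 a b b = 0 := by
  simp only [det3_eq_dotProduct_cross, dot_cross_self]

/-- Cramer's rule in adjugate form. -/
lemma det3_smul_eq (a b c v : Fin 3 → ℝ) :
    det3 a b c • v = det3 v b c • a + det3 a v c • b + det3 a b v • c := by
  ext i
  fin_cases i <;> simp [det3, Matrix.det_fin_three] <;> ring

lemma exists_eq_smul_of_det3_eq_zero {a b c v : Fin 3 → ℝ} (habc : det3 a b c ≠ 0)
    (hab : det3 a b v = 0) (hbc : det3 b c v = 0) : ∃ t : ℝ, v = t • b := by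
  refine ⟨det3 a v c / det3 a b c, ?_⟩
  have hv := det3_smul_eq a b c v
  rw [hab, det3_rotate v, hbc, zero_smul, zero_smul, zero_add, add_zero] at hv
  rw [div_eq_inv_mul, mul_smul, ← hv, inv_smul_smul₀ habc]

lemma linearIndependent_pair_of_det3_ne_zero {a b c : Fin 3 → ℝ} (h : det3 a b c ≠ 0) :
    LinearIndependent ℝ ![a, b] := by
  have habc : LinearIndependent ℝ ![a, b, c] := linearIndependent_rows_of_det_ne_zero h
  convert habc.comp Fin.castSucc (Fin.castSucc_injective 2) using 1
  ext i
  fin_cases i <;> rfl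

def IsEqualVolume (X : ℤ → Fin 3 → ℝ) : Prop :=
  ∀ j, det3 (X (j - 1)) (X j) (X (j + 1)) = 1

def IsUnimodularField (X W : ℤ → Fin 3 → ℝ) : Prop :=
  ∀ j, det3 (X j) (X (j + 1)) (W j) = 1

def IsParallelField (X W : ℤ → Fin 3 → ℝ) : Prop :=
  ∀ j, ∃ s : ℝ, W (j + 1) - W j = s • (X (j + 1) - X j)

variable {X U V W : ℤ → Fin 3 → ℝ}

lemma IsEqualVolume.det3_succ (hX : IsEqualVolume X) (j : ℤ) :
    det3 (X j) (X (j + 1)) (X (j + 1 + 1)) = 1 := by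
  simpa using hX (j + 1)

lemma IsUnimodularField.det3_sub_eq_zero (hU : IsUnimodularField X U)
    (hV : IsUnimodularField X V) (j : ℤ) : det3 (X j) (X (j + 1)) ((V - U) j) = 0 := by
  rw [Pi.sub_apply, det3_sub_right, hV j, hU j, sub_self]

lemma IsParallelField.sub (hV : IsParallelField X V) (hU : IsParallelField X U) :
    IsParallelField X (V - U) := by
  intro j
  obtain ⟨s, hs⟩ := hV j
  obtain ⟨t, ht⟩ := hU j
  refine ⟨s - t, ?_⟩
  rw [sub_smul, ← hs, ← ht, Pi.sub_apply, Pi.sub_apply]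
  abel

lemma IsParallelField.det3_succ_eq (hW : IsParallelField X W) (j : ℤ) :
    det3 (X j) (X (j + 1)) (W (j + 1)) = det3 (X j) (X (j + 1)) (W j) := by
  obtain ⟨s, hs⟩ := hW j
  have hstep := congrArg (det3 (X j) (X (j + 1))) hs
  rw [det3_sub_right, det3_smul_right, det3_sub_right, det3_self_middle_right,
    det3_self_left_right, sub_zero, mul_zero, sub_eq_zero] at hstep
  exact hstep

lemma IsParallelField.exists_eq_smul (hX : IsEqualVolume X) (hW : IsParallelField X W)
    (hW0 : ∀ j, det3 (X j) (X (j + 1)) (W j) = 0) : ∃ c : ℤ → ℝ, ∀ j, W j = c j • X j := by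
  suffices ∀ j, ∃ t : ℝ, W j = t • X j from ⟨_, fun j => (this j).choose_spec⟩
  intro j
  have hprev : det3 (X (j - 1)) (X j) (W j) = 0 := by
    have h := hW.det3_succ_eq (j - 1)
    rw [hW0 (j - 1)] at h
    simpa using h
  exact exists_eq_smul_of_det3_eq_zero (ne_of_eq_of_ne (hX j) one_ne_zero) hprev (hW0 j)

lemma IsParallelField.coeff_succ_eq (hX : IsEqualVolume X) (hW : IsParallelField X W)
    {c : ℤ → ℝ} (hc : ∀ j, W j = c j • X j) (j : ℤ) : c (j + 1) = c j := by
  obtain ⟨s, hs⟩ := hW j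
  have hindep := linearIndependent_pair_of_det3_ne_zero
    (ne_of_eq_of_ne (hX.det3_succ j) one_ne_zero)
  obtain ⟨h₀, h₁⟩ := LinearIndependent.pair_iff.mp hindep (s - c j) (c (j + 1) - s) <| by
    rw [hc, hc] at hs
    linear_combination (norm := module) hs
  linarith

lemma Int.apply_eq_apply_zero_of_succ_eq {α : Type*} {f : ℤ → α} (hf : ∀ j, f (j + 1) = f j)
    (i : ℤ) : f i = f 0 := by
  induction i using Int.induction_on with
  | zero => rfl
  | succ k ih => rw [hf, ih]
  | pred k ih => rw [← ih, ← hf (-k - 1), sub_add_cancel]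

/-- any parallel unimodular transversal field along an equal-volume polygon
differs from the canonical one by a constant multiple of X. -/
theorem parallel_unimodular_unique_up_to_cX
    (X U Ub : ℤ → Fin 3 → ℝ)
    (hev : ∀ j, det3 (X (j - 1)) (X j) (X (j + 1)) = 1)
    (hUuni : ∀ j, det3 (X j) (X (j + 1)) (U j) = 1)
    (hUpar : ∀ j, ∃ s : ℝ, U (j + 1) - U j = s • (X (j + 1) - X j))
    (hUbuni : ∀ j, det3 (X j) (X (j + 1)) (Ub j) = 1)
    (hUbpar : ∀ j, ∃ s : ℝ, Ub (j + 1) - Ub j = s • (X (j + 1) - X j)) :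
    ∃ c : ℝ, ∀ i, Ub i - U i = c • X i := by
  have hD : IsParallelField X (Ub - U) := IsParallelField.sub hUbpar hUpar
  obtain ⟨c, hc⟩ := hD.exists_eq_smul hev (IsUnimodularField.det3_sub_eq_zero hUuni hUbuni)
  have hconst := hD.coeff_succ_eq hev hc
  exact ⟨c 0, fun i => by rw [← Int.apply_eq_apply_zero_of_succ_eq hconst i, ← hc, Pi.sub_apply]⟩
end

section
/- Duality is an involution: if (Y,V) is the dual pair of (X,U) (with U parallel and transversal), then (X,U) is the dual pair of (Y,V), i.e., X(i)·Y'(i) = 0, X(i)·V(i-1/2) = 1, X(i)·Y(i-1/2) = 0, and U(i)·Y'(i) = 0, U(i)·Y(i-1/2) = 1, U(i)·V(i-1/2) = 0, where Y'(i) = Y(i+1/2) - Y(i-1/2). -/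
/-!
Set `j = i - 1`. The vectors `Y j` and `V j` annihilate the edge `X (j + 1) - X j`, and, because
`U` moves parallel to that edge, also `U (j + 1) - U j`. Hence their pairings with `X (j + 1)` and
`U (j + 1)` equal those with `X j` and `U j`, which are prescribed. The conditions on `Y'(i)` then
follow by subtracting the pairings with `Y i`, which are again prescribed.
-/

open Matrix

section

variable {n R : Type*} [Fintype n] [CommRing R]

theorem dotProduct_eq_of_dotProduct_sub_eq_zero {w x y : n → R} (h : w ⬝ᵥ (y - x) = 0) :
    w ⬝ᵥ y = w ⬝ᵥ x :=
  sub_eq_zero.mp (by rwa [← dotProduct_sub])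

theorem dotProduct_eq_of_sub_eq_smul {w x y d : n → R} {c : R} (hd : w ⬝ᵥ d = 0)
    (h : y - x = c • d) : w ⬝ᵥ y = w ⬝ᵥ x :=
  dotProduct_eq_of_dotProduct_sub_eq_zero (by rw [h, dotProduct_smul, hd, smul_zero])

end

theorem duality_involution_general
    (X U Y V : ℤ → Fin 3 → ℝ) (b : ℤ → ℝ)
    (hpar : ∀ j, U (j + 1) - U j = -b j • (X (j + 1) - X j))
    (hY1 : ∀ j, Y j ⬝ᵥ (X (j + 1) - X j) = 0)
    (hY2 : ∀ j, Y j ⬝ᵥ U j = 1)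
    (hY3 : ∀ j, Y j ⬝ᵥ X j = 0)
    (hV1 : ∀ j, V j ⬝ᵥ (X (j + 1) - X j) = 0)
    (hV2 : ∀ j, V j ⬝ᵥ U j = 0)
    (hV3 : ∀ j, V j ⬝ᵥ X j = 1)
    (i : ℤ) :
    X i ⬝ᵥ (Y i - Y (i - 1)) = 0 ∧ X i ⬝ᵥ V (i - 1) = 1 ∧
      X i ⬝ᵥ Y (i - 1) = 0 ∧
    U i ⬝ᵥ (Y i - Y (i - 1)) = 0 ∧ U i ⬝ᵥ Y (i - 1) = 1 ∧
      U i ⬝ᵥ V (i - 1) = 0 := by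
  obtain ⟨j, rfl⟩ : ∃ j, i = j + 1 := ⟨i - 1, (sub_add_cancel i 1).symm⟩
  rw [add_sub_cancel_right]
  have hXY : X (j + 1) ⬝ᵥ Y j = 0 := by
    rw [dotProduct_comm, dotProduct_eq_of_dotProduct_sub_eq_zero (hY1 j), hY3]
  have hXV : X (j + 1) ⬝ᵥ V j = 1 := by
    rw [dotProduct_comm, dotProduct_eq_of_dotProduct_sub_eq_zero (hV1 j), hV3]
  have hUY : U (j + 1) ⬝ᵥ Y j = 1 := by
    rw [dotProduct_comm, dotProduct_eq_of_sub_eq_smul (hY1 j) (hpar j), hY2]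
  have hUV : U (j + 1) ⬝ᵥ V j = 0 := by
    rw [dotProduct_comm, dotProduct_eq_of_sub_eq_smul (hV1 j) (hpar j), hV2]
  refine ⟨?_, hXV, hXY, ?_, hUY, hUV⟩
  · rw [dotProduct_sub, hXY, dotProduct_comm, hY3, sub_zero]
  · rw [dotProduct_sub, hUY, dotProduct_comm, hY2, sub_self]

/-- duality is an involution: (X,U) is the dual pair of (Y,V). -/
theorem duality_involution
    (X U Y V : ℤ → Fin 3 → ℝ) (b : ℤ → ℝ)
    (htrans : ∀ j, 0 < det3 (X j) (X (j + 1)) (U j))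
    (hpar : ∀ j, U (j + 1) - U j = -b j • (X (j + 1) - X j))
    (hY1 : ∀ j, Y j ⬝ᵥ (X (j + 1) - X j) = 0)
    (hY2 : ∀ j, Y j ⬝ᵥ U j = 1)
    (hY3 : ∀ j, Y j ⬝ᵥ X j = 0)
    (hV1 : ∀ j, V j ⬝ᵥ (X (j + 1) - X j) = 0)
    (hV2 : ∀ j, V j ⬝ᵥ U j = 0)
    (hV3 : ∀ j, V j ⬝ᵥ X j = 1)
    (i : ℤ) :
    X i ⬝ᵥ (Y i - Y (i - 1)) = 0 ∧ X i ⬝ᵥ V (i - 1) = 1 ∧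
      X i ⬝ᵥ Y (i - 1) = 0 ∧
    U i ⬝ᵥ (Y i - Y (i - 1)) = 0 ∧ U i ⬝ᵥ Y (i - 1) = 1 ∧
      U i ⬝ᵥ V (i - 1) = 0 :=
  duality_involution_general X U Y V b hpar hY1 hY2 hY3 hV1 hV2 hV3 i
end

section
/- The dual polygon satisfies α(Y)(i+1/2) = α(i)α(i+1)/(β(i-1/2)β(i+1/2)β(i+3/2)), where α(Y)(i+1/2) = [Y(i-1/2), Y(i+1/2), Y(i+3/2)]. In particular, Y is locally convex with respect to the origin whenever X is locally convex and U is transversal. -/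
/-!
By Cramer's rule, the three linear conditions defining `Y j` say exactly that
`β j • Y j = X j ⨯₃ X (j + 1)`, where `β j = [X j, X (j+1), U j]`.
Since `(b ⨯₃ c) ⨯₃ (c ⨯₃ d) = [b, c, d] • c`, three consecutive cross products satisfy
`[a ⨯₃ b, b ⨯₃ c, c ⨯₃ d] = [a, b, c] [b, c, d]`, which gives
`β (i-1) β i β (i+1) [Y (i-1), Y i, Y (i+1)] = α i α (i+1)`.
-/

open Matrix

section CrossProduct

variable {R : Type*} [CommRing R]

theorem dotProduct_cross_eq_det (u v w : Fin 3 → R) : u ⬝ᵥ v ⨯₃ w = det (of ![u, v, w]) :=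
  triple_product_eq_det u v w

theorem det_smul_eq_dotProduct_smul_cross (a b u v : Fin 3 → R) :
    det (of ![a, b, u]) • v = (v ⬝ᵥ a) • b ⨯₃ u + (v ⬝ᵥ b) • u ⨯₃ a + (v ⬝ᵥ u) • a ⨯₃ b := by
  rw [det_fin_three]
  ext i
  fin_cases i <;>
  · simp only [cross_apply, vec3_dotProduct, of_apply, Pi.add_apply, Pi.smul_apply, smul_eq_mul,
      Fin.isValue, Fin.zero_eta, Fin.mk_one, Fin.reduceFinMk, cons_val]
    ring

theorem det_smul_eq_cross_of_dotProduct {a b u v : Fin 3 → R}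
    (ha : v ⬝ᵥ a = 0) (hb : v ⬝ᵥ b = 0) (hu : v ⬝ᵥ u = 1) :
    det (of ![a, b, u]) • v = a ⨯₃ b := by
  simp [det_smul_eq_dotProduct_smul_cross, ha, hb, hu]

theorem det_smul_smul_smul (r s t : R) (u v w : Fin 3 → R) :
    det (of ![r • u, s • v, t • w]) = r * s * t * det (of ![u, v, w]) := by
  simp only [← dotProduct_cross_eq_det, map_smul, LinearMap.smul_apply, smul_dotProduct,
    dotProduct_smul, smul_eq_mul]
  ring

theorem det_cross_cross_cross (a b c d : Fin 3 → R) :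
    det (of ![a ⨯₃ b, b ⨯₃ c, c ⨯₃ d]) = det (of ![a, b, c]) * det (of ![b, c, d]) := by
  have hbc : b ⨯₃ c ⨯₃ (c ⨯₃ d) = det (of ![b, c, d]) • c := by
    rw [cross_cross_eq_smul_sub_smul, dot_self_cross, zero_smul, sub_zero, dotProduct_cross_eq_det]
  rw [← dotProduct_cross_eq_det, hbc, dotProduct_smul, smul_eq_mul, dotProduct_comm,
    triple_product_permutation, dotProduct_cross_eq_det, mul_comm]

theorem mul_det_eq_det_mul_det_of_smul_eq_cross {X Y : ℤ → Fin 3 → R} {β : ℤ → R}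
    (hY : ∀ j, β j • Y j = X j ⨯₃ X (j + 1)) (i : ℤ) :
    β (i - 1) * β i * β (i + 1) * det (of ![Y (i - 1), Y i, Y (i + 1)]) =
      det (of ![X (i - 1), X i, X (i + 1)]) * det (of ![X i, X (i + 1), X (i + 2)]) := by
  have hYprev := hY (i - 1)
  have hYnext := hY (i + 1)
  rw [sub_add_cancel] at hYprev
  rw [add_assoc, one_add_one_eq_two] at hYnext
  rw [← det_smul_smul_smul, hYprev, hY i, hYnext, det_cross_cross_cross]

end CrossProduct

theorem dual_alpha_formula_general
    (X U Y : ℤ → Fin 3 → ℝ)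
    (hconv : ∀ j, 0 < det3 (X (j - 1)) (X j) (X (j + 1)))
    (htrans : ∀ j, 0 < det3 (X j) (X (j + 1)) (U j))
    (hY1 : ∀ j, Y j ⬝ᵥ (X (j + 1) - X j) = 0)
    (hY2 : ∀ j, Y j ⬝ᵥ U j = 1)
    (hY3 : ∀ j, Y j ⬝ᵥ X j = 0)
    (i : ℤ) :
    det3 (Y (i - 1)) (Y i) (Y (i + 1)) =
      det3 (X (i - 1)) (X i) (X (i + 1)) * det3 (X i) (X (i + 1)) (X (i + 2)) /
        (det3 (X (i - 1)) (X i) (U (i - 1)) * det3 (X i) (X (i + 1)) (U i) *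
          det3 (X (i + 1)) (X (i + 2)) (U (i + 1))) ∧
    0 < det3 (Y (i - 1)) (Y i) (Y (i + 1)) := by
  have hβY : ∀ j, det3 (X j) (X (j + 1)) (U j) • Y j = X j ⨯₃ X (j + 1) := fun j =>
    det_smul_eq_cross_of_dotProduct (hY3 j) (by simpa [dotProduct_sub, hY3 j] using hY1 j)
      (hY2 j)
  have hdet := mul_det_eq_det_mul_det_of_smul_eq_cross hβY i
  have hβ := mul_pos (mul_pos (htrans (i - 1)) (htrans i)) (htrans (i + 1))
  have hα := mul_pos (hconv i) (hconv (i + 1))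
  simp only [det3, sub_add_cancel, add_sub_cancel_right, add_assoc, one_add_one_eq_two]
    at hdet hβ hα ⊢
  have hformula := eq_div_of_mul_eq hβ.ne' ((mul_comm _ _).trans hdet)
  exact ⟨hformula, hformula ▸ div_pos hα hβ⟩

/-- α(Y)(i+1/2) = α(i)α(i+1)/(β(i-1/2)β(i+1/2)β(i+3/2)); in particular
the dual polygon Y is locally convex. -/
theorem dual_alpha_formula
    (X U Y : ℤ → Fin 3 → ℝ) (b : ℤ → ℝ)
    (hconv : ∀ j, 0 < det3 (X (j - 1)) (X j) (X (j + 1)))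
    (htrans : ∀ j, 0 < det3 (X j) (X (j + 1)) (U j))
    (hpar : ∀ j, U (j + 1) - U j = -b j • (X (j + 1) - X j))
    (hY1 : ∀ j, Y j ⬝ᵥ (X (j + 1) - X j) = 0)
    (hY2 : ∀ j, Y j ⬝ᵥ U j = 1)
    (hY3 : ∀ j, Y j ⬝ᵥ X j = 0)
    (i : ℤ) :
    det3 (Y (i - 1)) (Y i) (Y (i + 1)) =
      det3 (X (i - 1)) (X i) (X (i + 1)) * det3 (X i) (X (i + 1)) (X (i + 2)) /
        (det3 (X (i - 1)) (X i) (U (i - 1)) * det3 (X i) (X (i + 1)) (U i) *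
          det3 (X (i + 1)) (X (i + 2)) (U (i + 1))) ∧
    0 < det3 (Y (i - 1)) (Y i) (Y (i + 1)) :=
  dual_alpha_formula_general X U Y hconv htrans hY1 hY2 hY3 i
end

section
/- If (Y,V) is the dual of (X,U) and Ū = cX + dU with constants c, d, d ≠ 0, then the dual pair of (X,Ū) is (Ȳ,V̄) with Ȳ = d⁻¹Y and V̄ = -c·d⁻¹·Y + V. -/
open Matrix

/-- At index `i` of the paper: `t = X(i+1) - X(i)`, `x = X(i)`, `w = W(i)`. -/
def IsDualFrame {K n : Type*} [CommSemiring K] [Fintype n] (t x w y v : n → K) : Prop :=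
  y ⬝ᵥ t = 0 ∧ y ⬝ᵥ w = 1 ∧ y ⬝ᵥ x = 0 ∧ v ⬝ᵥ t = 0 ∧ v ⬝ᵥ w = 0 ∧ v ⬝ᵥ x = 1

theorem IsDualFrame.smul_add_smul {K n : Type*} [Field K] [Fintype n] {t x u y v : n → K}
    (h : IsDualFrame t x u y v) (c : K) {d : K} (hd : d ≠ 0) :
    IsDualFrame t x (c • x + d • u) (d⁻¹ • y) (-(c * d⁻¹) • y + v) := by
  obtain ⟨hyt, hyu, hyx, hvt, hvu, hvx⟩ := h
  refine ⟨?_, ?_, ?_, ?_, ?_, ?_⟩ <;>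
    simp only [smul_dotProduct, add_dotProduct, dotProduct_add, dotProduct_smul, smul_eq_mul,
      hyt, hyu, hyx, hvt, hvu, hvx] <;>
    field_simp <;> ring

theorem dual_of_modified_field_general
    (X U Y V : ℤ → Fin 3 → ℝ) (c d : ℝ)
    (hd : d ≠ 0)
    (hY1 : ∀ j, Y j ⬝ᵥ (X (j + 1) - X j) = 0)
    (hY2 : ∀ j, Y j ⬝ᵥ U j = 1)
    (hY3 : ∀ j, Y j ⬝ᵥ X j = 0)
    (hV1 : ∀ j, V j ⬝ᵥ (X (j + 1) - X j) = 0)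
    (hV2 : ∀ j, V j ⬝ᵥ U j = 0)
    (hV3 : ∀ j, V j ⬝ᵥ X j = 1)
    (i : ℤ) :
    (d⁻¹ • Y i) ⬝ᵥ (X (i + 1) - X i) = 0 ∧
    (d⁻¹ • Y i) ⬝ᵥ (c • X i + d • U i) = 1 ∧
    (d⁻¹ • Y i) ⬝ᵥ X i = 0 ∧
    (-(c * d⁻¹) • Y i + V i) ⬝ᵥ (X (i + 1) - X i) = 0 ∧
    (-(c * d⁻¹) • Y i + V i) ⬝ᵥ (c • X i + d • U i) = 0 ∧
    (-(c * d⁻¹) • Y i + V i) ⬝ᵥ X i = 1 :=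
  IsDualFrame.smul_add_smul ⟨hY1 i, hY2 i, hY3 i, hV1 i, hV2 i, hV3 i⟩ c hd

/-- the dual of (X, cX+dU) is (d⁻¹ Y, -c d⁻¹ Y + V). -/
theorem dual_of_modified_field
    (X U Y V : ℤ → Fin 3 → ℝ) (b : ℤ → ℝ) (c d : ℝ)
    (htrans : ∀ j, 0 < det3 (X j) (X (j + 1)) (U j))
    (hpar : ∀ j, U (j + 1) - U j = -b j • (X (j + 1) - X j))
    (hd : d ≠ 0)
    (htransUb : ∀ j, 0 < det3 (X j) (X (j + 1)) (c • X j + d • U j))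
    (hY1 : ∀ j, Y j ⬝ᵥ (X (j + 1) - X j) = 0)
    (hY2 : ∀ j, Y j ⬝ᵥ U j = 1)
    (hY3 : ∀ j, Y j ⬝ᵥ X j = 0)
    (hV1 : ∀ j, V j ⬝ᵥ (X (j + 1) - X j) = 0)
    (hV2 : ∀ j, V j ⬝ᵥ U j = 0)
    (hV3 : ∀ j, V j ⬝ᵥ X j = 1)
    (i : ℤ) :
    (d⁻¹ • Y i) ⬝ᵥ (X (i + 1) - X i) = 0 ∧
    (d⁻¹ • Y i) ⬝ᵥ (c • X i + d • U i) = 1 ∧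
    (d⁻¹ • Y i) ⬝ᵥ X i = 0 ∧
    (-(c * d⁻¹) • Y i + V i) ⬝ᵥ (X (i + 1) - X i) = 0 ∧
    (-(c * d⁻¹) • Y i + V i) ⬝ᵥ (c • X i + d • U i) = 0 ∧
    (-(c * d⁻¹) • Y i + V i) ⬝ᵥ X i = 1 :=
  dual_of_modified_field_general X U Y V c d hd hY1 hY2 hY3 hV1 hV2 hV3 i
end

section
/- Four consecutive nodes X(i-1), X(i), X(i+1), X(i+2) of X are coplanar (Δ(i+1/2) = 0) if and only if the three consecutive normal lines of the dual pair (Y,V) at i-1/2, i+1/2, i+3/2 are concurrent, i.e., b(Y,V)(i) = b(Y,V)(i+1). -/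
/-!
Cramer's rule applied to the relations defining the dual pair gives, at every vertex `j`,
`b(Y,V)(j) · [X(j-1), X(j), X(j+1)] = [X(j) - X(j-1), X(j+1) - X(j), U(j-1)]`.
Because `U` is parallel, `U(i-1)` and `U(i)` differ by a multiple of `X(i) - X(i-1)`, so both
right-hand sides at `j = i, i+1` may be taken with `U(i)`, and a Plücker relation turns their
difference into
`(b(i) - b(i+1)) [X(i-1), X(i), X(i+1)] [X(i), X(i+1), X(i+2)] = -Δ(i+1/2) [X(i), X(i+1), U(i)]`.
Local convexity and transversality make the three brackets positive.
-/

open Matrix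

lemma det3_eq (a b c : Fin 3 → ℝ) :
    det3 a b c = a 0 * b 1 * c 2 - a 0 * b 2 * c 1 - a 1 * b 0 * c 2
      + a 1 * b 2 * c 0 + a 2 * b 0 * c 1 - a 2 * b 1 * c 0 := by
  simp [det3, Matrix.det_fin_three]

lemma det3_third_add_smul_first (a b c : Fin 3 → ℝ) (t : ℝ) :
    det3 a b (c + t • a) = det3 a b c := by
  simp only [det3_eq, Pi.add_apply, Pi.smul_apply, smul_eq_mul]; ring

lemma det3_mul_dotProduct (a b c w y : Fin 3 → ℝ) :
    det3 a b c * (y ⬝ᵥ w) =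
      det3 w b c * (y ⬝ᵥ a) + det3 a w c * (y ⬝ᵥ b) + det3 a b w * (y ⬝ᵥ c) := by
  simp only [det3_eq, dotProduct, Fin.sum_univ_three]; ring

lemma det3_plucker (p q r s w : Fin 3 → ℝ) :
    det3 (q - p) (r - q) w * det3 q r s - det3 (r - q) (s - r) w * det3 p q r =
      -(det3 (s - r) (r - q) (q - p) * det3 q r w) := by
  simp only [det3_eq, Pi.sub_apply]; ring

/-- Dot the dual relation `v₁ - v₀ = -β • (y₁ - y₀)` with `x₂` and expand `x₂` in the basis
`x₀, x₁, u` by Cramer's rule. -/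
lemma mul_det3_eq_of_dual {x₀ x₁ x₂ u y₀ v₀ y₁ v₁ : Fin 3 → ℝ} {β : ℝ}
    (hy₀ : y₀ ⬝ᵥ x₀ = 0) (hy₀' : y₀ ⬝ᵥ x₁ = 0) (hy₀u : y₀ ⬝ᵥ u = 1)
    (hv₀ : v₀ ⬝ᵥ x₀ = 1) (hv₀' : v₀ ⬝ᵥ x₁ = 1) (hv₀u : v₀ ⬝ᵥ u = 0)
    (hy₁ : y₁ ⬝ᵥ x₂ = 0) (hv₁ : v₁ ⬝ᵥ x₂ = 1) (hβ : v₁ - v₀ = -β • (y₁ - y₀)) :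
    β * det3 x₀ x₁ x₂ = det3 (x₁ - x₀) (x₂ - x₁) u := by
  have hy := det3_mul_dotProduct x₀ x₁ u x₂ y₀
  have hv := det3_mul_dotProduct x₀ x₁ u x₂ v₀
  have hβx₂ := congrArg (· ⬝ᵥ x₂) hβ
  simp only [sub_dotProduct, smul_dotProduct, smul_eq_mul] at hβx₂
  rw [hy₀, hy₀', hy₀u] at hy
  rw [hv₀, hv₀', hv₀u] at hv
  rw [hy₁, hv₁] at hβx₂
  have hsub : det3 (x₁ - x₀) (x₂ - x₁) u = det3 x₀ x₁ u - det3 x₂ x₁ u - det3 x₀ x₂ u := by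
    simp only [det3_eq, Pi.sub_apply]; ring
  rw [hsub]
  linear_combination (-β) * hy - hv - det3 x₀ x₁ u * hβx₂

/-- four consecutive nodes of X are coplanar iff the corresponding
three normal lines of the dual pair are concurrent, i.e. b(Y,V)(i) = b(Y,V)(i+1). -/
theorem coplanar_iff_dual_concurrent
    (X U Y V : ℤ → Fin 3 → ℝ) (b bYV : ℤ → ℝ)
    (hconv : ∀ j, 0 < det3 (X (j - 1)) (X j) (X (j + 1)))
    (htrans : ∀ j, 0 < det3 (X j) (X (j + 1)) (U j))
    (hpar : ∀ j, U (j + 1) - U j = -b j • (X (j + 1) - X j))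
    (hY1 : ∀ j, Y j ⬝ᵥ (X (j + 1) - X j) = 0)
    (hY2 : ∀ j, Y j ⬝ᵥ U j = 1)
    (hY3 : ∀ j, Y j ⬝ᵥ X j = 0)
    (hV1 : ∀ j, V j ⬝ᵥ (X (j + 1) - X j) = 0)
    (hV2 : ∀ j, V j ⬝ᵥ U j = 0)
    (hV3 : ∀ j, V j ⬝ᵥ X j = 1)
    (hdualpar : ∀ j, V j - V (j - 1) = -bYV j • (Y j - Y (j - 1)))
    (i : ℤ) :
    det3 (X (i + 2) - X (i + 1)) (X (i + 1) - X i) (X i - X (i - 1)) = 0 ↔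
      bYV i = bYV (i + 1) := by
  have hY_next (j : ℤ) : Y j ⬝ᵥ X (j + 1) = 0 := by
    linarith [hY1 j, hY3 j, dotProduct_sub (Y j) (X (j + 1)) (X j)]
  have hV_next (j : ℤ) : V j ⬝ᵥ X (j + 1) = 1 := by
    linarith [hV1 j, hV3 j, dotProduct_sub (V j) (X (j + 1)) (X j)]
  have hcurv (j : ℤ) : bYV j * det3 (X (j - 1)) (X j) (X (j + 1)) =
      det3 (X j - X (j - 1)) (X (j + 1) - X j) (U (j - 1)) := by
    have hy := hY_next (j - 1)
    have hv := hV_next (j - 1)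
    rw [sub_add_cancel] at hy hv
    exact mul_det3_eq_of_dual (hY3 _) hy (hY2 _) (hV3 _) hv (hV2 _) (hY_next j) (hV_next j)
      (hdualpar j)
  have hU : U (i - 1) = U i + b (i - 1) • (X i - X (i - 1)) := by
    have h := hpar (i - 1)
    rw [sub_add_cancel] at h
    linear_combination (norm := module) -h
  have h₀ := hcurv i
  rw [hU, det3_third_add_smul_first] at h₀
  have h₁ := hcurv (i + 1)
  have hC := hconv (i + 1)
  rw [add_sub_cancel_right, show i + 1 + 1 = i + 2 by ring] at h₁ hC
  have hdiff : (bYV i - bYV (i + 1)) * (det3 (X (i - 1)) (X i) (X (i + 1)) *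
      det3 (X i) (X (i + 1)) (X (i + 2))) =
      -(det3 (X (i + 2) - X (i + 1)) (X (i + 1) - X i) (X i - X (i - 1)) *
        det3 (X i) (X (i + 1)) (U i)) := by
    linear_combination det3 (X i) (X (i + 1)) (X (i + 2)) * h₀ -
      det3 (X (i - 1)) (X i) (X (i + 1)) * h₁ +
      det3_plucker (X (i - 1)) (X i) (X (i + 1)) (X (i + 2)) (U i)
  rw [← mul_eq_zero_iff_right (htrans i).ne', ← neg_eq_zero, ← hdiff,
    mul_eq_zero_iff_right (mul_pos (hconv i) hC).ne', sub_eq_zero]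
end
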